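/- arXiv:2602.21966 — 2 statements merged into one kernel-verified Lean document; each statement's English description precedes it below -/
import Mathlib

section
/- For any sponsored-shopping position auction with the GSP payment rule, every autobidding equilibrium (α, π) achieves expected social welfare at least half the optimum: Wel(π) ≥ (1/2)·Wel^opt. -/
open Finset MeasureTheory

namespace SponsoredShopping

noncomputable section

/-- An item is a pair `(i, j)`: bidder `i`'s `j`-th item. -/
abbrev Item (n m : ℕ) : Type := Fin n × Fin m

/-- An allocation assigns to each rank `k` (0-based) an item. -/
abbrev Alloc (n m : ℕ) : Type := Fin (n * m) ≃ Item n m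

/-- Maximum of `f` over a finite set, with value `0` on the empty set. -/
def fmax {ι : Type*} (s : Finset ι) (f : ι → ℝ) : ℝ :=
  WithBot.unbotD 0 (s.sup fun i => (f i : WithBot ℝ))

variable {n m : ℕ}

/-- An allocation is valid under bids `b` if bids are nonincreasing along ranks. -/
def ValidUnder (b : Item n m → ℝ) (a : Alloc n m) : Prop :=
  ∀ k k' : Fin (n * m), k ≤ k' → b (a k') ≤ b (a k)

/-- The value of bidder `i` under allocation `a`
(`c k` is the CTR of slot `k`, with `c k = 0` for `k ≥ K`). -/
def bidderValue (c : ℕ → ℝ) (v : Item n m → ℝ) (a : Alloc n m) (i : Fin n) : ℝ :=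
  ∑ k : Fin (n * m), if (a k).1 = i then c k * v (a k) else 0

/-- Social welfare of an allocation. -/
def wel (c : ℕ → ℝ) (v : Item n m → ℝ) (a : Alloc n m) : ℝ :=
  ∑ k : Fin (n * m), c k * v (a k)

/-- Optimal social welfare. -/
def welOpt (c : ℕ → ℝ) (v : Item n m → ℝ) : ℝ :=
  fmax (univ : Finset (Alloc n m)) (wel c v)

/-- GSP per-click price of the item ranked `k`: highest bid among lower-ranked
items belonging to other bidders (`0` if none). -/
def gspPrice (b : Item n m → ℝ) (a : Alloc n m) (k : Fin (n * m)) : ℝ :=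
  fmax (univ.filter fun k' : Fin (n * m) => k < k' ∧ (a k').1 ≠ (a k).1)
    (fun k' => b (a k'))

/-- Total GSP payment of bidder `i`. -/
def gspPay (c : ℕ → ℝ) (b : Item n m → ℝ) (a : Alloc n m) (i : Fin n) : ℝ :=
  ∑ k : Fin (n * m), if (a k).1 = i then c k * gspPrice b a k else 0

/-- Bid-welfare of an allocation. -/
def bidWelfare (c : ℕ → ℝ) (b : Item n m → ℝ) (a : Alloc n m) : ℝ :=
  ∑ k : Fin (n * m), c k * b (a k)

/-- Bids with bidder `i`'s bids zeroed out. -/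
def exclBids (b : Item n m → ℝ) (i : Fin n) : Item n m → ℝ :=
  fun x => if x.1 = i then 0 else b x

/-- Bid-welfare obtained by bidders other than `i` in allocation `a`. -/
def othersWelfare (c : ℕ → ℝ) (b : Item n m → ℝ) (a : Alloc n m) (i : Fin n) : ℝ :=
  ∑ k : Fin (n * m), if (a k).1 ≠ i then c k * b (a k) else 0

/-- Optimal counterfactual bid-welfare without bidder `i`. -/
def woptWithout (c : ℕ → ℝ) (b : Item n m → ℝ) (i : Fin n) : ℝ :=
  fmax (univ : Finset (Alloc n m)) (fun a' => bidWelfare c (exclBids b i) a')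

/-- VCG payment of bidder `i`. -/
def vcgPay (c : ℕ → ℝ) (b : Item n m → ℝ) (a : Alloc n m) (i : Fin n) : ℝ :=
  woptWithout c b i - othersWelfare c b a i

/-- The two mechanisms considered. -/
inductive Mech | gsp | vcg

/-- Payment of bidder `i` under mechanism `M`. -/
def pay : Mech → (ℕ → ℝ) → (Item n m → ℝ) → Alloc n m → Fin n → ℝ
  | .gsp => gspPay
  | .vcg => vcgPay

/-- `S_k(a)`: the set of items assigned to the first `k` slots in `a`. -/
def topk (a : Alloc n m) (k : ℕ) : Finset (Item n m) :=
  (univ.filter fun r : Fin (n * m) => (r : ℕ) < k).image a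

/-!
Sort all items by decreasing value into an allocation `s`; by the rearrangement inequality `s`
is welfare-optimal. Fix a valid allocation `a` and a rank `k`. Among the `k + 1` items
`s 0, …, s k`, all worth at least `v (s k)`, one sits at a rank `r ≥ k` of `a`. If `a r` and
`a k` have the same owner, validity (a bidder's bids are a common multiple of its values) gives
`v (a r) ≤ v (a k)`; otherwise `a r` lies below `a k`, and its value is at most its bid, which
is at most the GSP price of rank `k`. Hence `Wel^opt ≤ Wel(a) + Σ_i P_i(a)` on the support of
`π`, and the ROI constraints bound the expected payments by the expected welfare.
-/

lemma fmax_eq_sup' {ι : Type*} {s : Finset ι} (hs : s.Nonempty) (f : ι → ℝ) :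
    fmax s f = s.sup' hs f := by
  change WithBot.unbotD 0 (s.sup (WithBot.some ∘ f)) = _
  rw [← coe_sup' hs, WithBot.unbotD_coe]

lemma le_fmax {ι : Type*} {s : Finset ι} {f : ι → ℝ} {i : ι} (hi : i ∈ s) :
    f i ≤ fmax s f := by
  rw [fmax_eq_sup' ⟨i, hi⟩]
  exact le_sup' f hi

lemma fmax_le {ι : Type*} {s : Finset ι} {f : ι → ℝ} {M : ℝ} (hs : s.Nonempty)
    (h : ∀ i ∈ s, f i ≤ M) : fmax s f ≤ M := by
  rw [fmax_eq_sup' hs]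
  exact sup'_le hs f h

lemma fmax_nonneg {ι : Type*} {s : Finset ι} {f : ι → ℝ} (h : ∀ i ∈ s, 0 ≤ f i) :
    0 ≤ fmax s f := by
  rcases s.eq_empty_or_nonempty with rfl | ⟨i, hi⟩
  · simp [fmax]
  · exact (h i hi).trans (le_fmax hi)

lemma exists_le_and_le_apply_of_injective {N : ℕ} {f : Fin N → Fin N} (hf : f.Injective)
    (k : Fin N) : ∃ j ≤ k, k ≤ f j := by
  by_contra! h
  have hcard := card_le_card_of_injOn f (s := Iic k) (t := Iio k)
    (fun j hj => mem_Iio.mpr (h j (mem_Iic.mp hj))) hf.injOn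
  simp at hcard

lemma exists_equiv_antitone_comp {N : ℕ} {ι β : Type*} [LinearOrder β] (e : Fin N ≃ ι)
    (f : ι → β) : ∃ s : Fin N ≃ ι, Antitone (f ∘ s) :=
  ⟨(Tuple.sort (OrderDual.toDual ∘ f ∘ e)).trans e,
    fun _ _ h => Tuple.monotone_sort (OrderDual.toDual ∘ f ∘ e) h⟩

lemma wel_le_wel_of_antitone {c : ℕ → ℝ} {v : Item n m → ℝ} (hc : Antitone c)
    {s : Alloc n m} (hs : Antitone (v ∘ s)) (a : Alloc n m) : wel c v a ≤ wel c v s := by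
  have hmv : Monovary (fun k : Fin (n * m) => c k) (v ∘ s) :=
    Antitone.monovary (fun _ _ h => hc h) hs
  simpa [wel] using hmv.sum_mul_comp_perm_le_sum_mul (σ := a.trans s.symm)

lemma ValidUnder.le_of_fst_eq {α : Fin n → ℝ} {v : Item n m → ℝ} {a : Alloc n m}
    (ha : ValidUnder (fun x => α x.1 * v x) a) (hα : ∀ i, 0 < α i) {k r : Fin (n * m)}
    (hkr : k ≤ r) (howner : (a r).1 = (a k).1) : v (a r) ≤ v (a k) := by
  have hbid := ha k r hkr
  simp only [howner] at hbid
  exact le_of_mul_le_mul_left hbid (hα _)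

lemma le_gspPrice {b : Item n m → ℝ} {a : Alloc n m} {k r : Fin (n * m)} (hkr : k < r)
    (howner : (a r).1 ≠ (a k).1) : b (a r) ≤ gspPrice b a k :=
  le_fmax (f := fun k' => b (a k')) (by simp [hkr, howner])

lemma gspPrice_nonneg {b : Item n m → ℝ} (hb : ∀ x, 0 ≤ b x) (a : Alloc n m)
    (k : Fin (n * m)) : 0 ≤ gspPrice b a k :=
  fmax_nonneg fun _ _ => hb _

lemma sum_bidderValue (c : ℕ → ℝ) (v : Item n m → ℝ) (a : Alloc n m) :
    ∑ i : Fin n, bidderValue c v a i = wel c v a := by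
  unfold bidderValue wel
  rw [sum_comm]
  simp

lemma sum_gspPay (c : ℕ → ℝ) (b : Item n m → ℝ) (a : Alloc n m) :
    ∑ i : Fin n, gspPay c b a i = ∑ k : Fin (n * m), c k * gspPrice b a k := by
  unfold gspPay
  rw [sum_comm]
  simp

lemma le_add_gspPrice_of_antitone {v : Item n m → ℝ} {α : Fin n → ℝ} {a s : Alloc n m}
    (hv : ∀ x, 0 ≤ v x) (hα : ∀ i, 1 ≤ α i) (ha : ValidUnder (fun x => α x.1 * v x) a)
    (hs : Antitone (v ∘ s)) (k : Fin (n * m)) :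
    v (s k) ≤ v (a k) + gspPrice (fun x => α x.1 * v x) a k := by
  obtain ⟨j, hjk, hkr⟩ : ∃ j ≤ k, k ≤ a.symm (s j) :=
    exists_le_and_le_apply_of_injective (a.symm.injective.comp s.injective) k
  set r := a.symm (s j)
  have hsr : v (s k) ≤ v (a r) := by simpa [r] using hs hjk
  have hprice : 0 ≤ gspPrice (fun x => α x.1 * v x) a k :=
    gspPrice_nonneg (fun x => mul_nonneg (zero_le_one.trans (hα x.1)) (hv x)) a k
  by_cases howner : (a r).1 = (a k).1
  · linarith [ha.le_of_fst_eq (fun i => one_pos.trans_le (hα i)) hkr howner]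
  · have hkr' : k < r := lt_of_le_of_ne hkr fun h => howner (by rw [h])
    linarith [le_gspPrice (b := fun x => α x.1 * v x) hkr' howner,
      le_mul_of_one_le_left (hv (a r)) (hα (a r).1), hv (a k)]

theorem welOpt_le_wel_add_sum_gspPay {v : Item n m → ℝ} {c : ℕ → ℝ} {α : Fin n → ℝ}
    {a : Alloc n m} (hv : ∀ x, 0 ≤ v x) (hc0 : ∀ k, 0 ≤ c k) (hc : Antitone c)
    (hα : ∀ i, 1 ≤ α i) (ha : ValidUnder (fun x => α x.1 * v x) a) :
    welOpt c v ≤ wel c v a + ∑ i : Fin n, gspPay c (fun x => α x.1 * v x) a i := by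
  obtain ⟨s, hs⟩ := exists_equiv_antitone_comp finProdFinEquiv.symm v
  calc welOpt c v ≤ wel c v s :=
        fmax_le ⟨s, mem_univ s⟩ fun a' _ => wel_le_wel_of_antitone hc hs a'
    _ ≤ ∑ k : Fin (n * m), c k * (v (a k) + gspPrice (fun x => α x.1 * v x) a k) :=
      sum_le_sum fun k _ =>
        mul_le_mul_of_nonneg_left (le_add_gspPrice_of_antitone hv hα ha hs k) (hc0 k)
    _ = wel c v a + ∑ i : Fin n, gspPay c (fun x => α x.1 * v x) a i := by
      rw [sum_gspPay, wel, ← sum_add_distrib]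
      simp only [mul_add]

theorem gsp_price_of_anarchy_general
    (n m : ℕ) (v : Item n m → ℝ) (c : ℕ → ℝ) (A : ℝ)
    (hv : ∀ x : Item n m, 0 ≤ v x)
    (hc0 : ∀ k, 0 ≤ c k) (hcmono : Antitone c)
    (α : Fin n → ℝ) (hα : ∀ i, α i ∈ Set.Icc 1 A)
    (π : Alloc n m → ℝ) (hπ0 : ∀ a, 0 ≤ π a) (hπ1 : ∑ a : Alloc n m, π a = 1)
    (hsupp : ∀ a : Alloc n m, 0 < π a → ValidUnder (fun x => α x.1 * v x) a)
    (hroi : ∀ i : Fin n,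
      ∑ a : Alloc n m, π a * gspPay c (fun x => α x.1 * v x) a i
        ≤ ∑ a : Alloc n m, π a * bidderValue c v a i) :
    (1 / 2) * welOpt c v ≤ ∑ a : Alloc n m, π a * wel c v a := by
  have hpoint : ∀ a, π a * welOpt c v
      ≤ π a * (wel c v a + ∑ i : Fin n, gspPay c (fun x => α x.1 * v x) a i) := by
    intro a
    rcases (hπ0 a).eq_or_lt with h | h
    · simp [← h]
    · exact mul_le_mul_of_nonneg_left
        (welOpt_le_wel_add_sum_gspPay hv hc0 hcmono (fun i => (hα i).1) (hsupp a h)) h.le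
  have hwelOpt : welOpt c v ≤ ∑ a : Alloc n m, π a * wel c v a +
      ∑ i : Fin n, ∑ a : Alloc n m, π a * gspPay c (fun x => α x.1 * v x) a i :=
    calc welOpt c v = ∑ a : Alloc n m, π a * welOpt c v := by rw [← sum_mul, hπ1, one_mul]
      _ ≤ ∑ a : Alloc n m,
          π a * (wel c v a + ∑ i : Fin n, gspPay c (fun x => α x.1 * v x) a i) :=
        sum_le_sum fun a _ => hpoint a
      _ = _ := by
        rw [sum_comm (γ := Fin n)]
        simp only [mul_add, mul_sum, sum_add_distrib]
  have hpay : ∑ i : Fin n, ∑ a : Alloc n m, π a * gspPay c (fun x => α x.1 * v x) a i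
      ≤ ∑ a : Alloc n m, π a * wel c v a :=
    calc _ ≤ ∑ i : Fin n, ∑ a : Alloc n m, π a * bidderValue c v a i :=
          sum_le_sum fun i _ => hroi i
      _ = _ := by
        rw [sum_comm]
        simp only [← mul_sum, sum_bidderValue]
  linarith

/-- Price of Anarchy for GSP: every autobidding equilibrium has expected social
welfare at least half the optimum. -/
theorem gsp_price_of_anarchy
    (n m K : ℕ) (v : Item n m → ℝ) (c : ℕ → ℝ) (A : ℝ)
    (hv : ∀ x : Item n m, 0 ≤ v x)
    (hvmono : ∀ (i : Fin n) (j j' : Fin m), j ≤ j' → v (i, j') ≤ v (i, j))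
    (hc1 : c 0 ≤ 1) (hc0 : ∀ k, 0 ≤ c k) (hcmono : Antitone c)
    (hcK : ∀ k, K ≤ k → c k = 0)
    (hA : 1 ≤ A)
    (α : Fin n → ℝ) (hα : ∀ i, α i ∈ Set.Icc 1 A)
    (π : Alloc n m → ℝ) (hπ0 : ∀ a, 0 ≤ π a) (hπ1 : ∑ a : Alloc n m, π a = 1)
    (hsupp : ∀ a : Alloc n m, 0 < π a → ValidUnder (fun x => α x.1 * v x) a)
    (hroi : ∀ i : Fin n,
      ∑ a : Alloc n m, π a * gspPay c (fun x => α x.1 * v x) a i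
        ≤ ∑ a : Alloc n m, π a * bidderValue c v a i)
    (hmaximal : ∀ i : Fin n,
      (∑ a : Alloc n m, π a * gspPay c (fun x => α x.1 * v x) a i
        < ∑ a : Alloc n m, π a * bidderValue c v a i) → α i = A) :
    (1 / 2) * welOpt c v ≤ ∑ a : Alloc n m, π a * wel c v a :=
  gsp_price_of_anarchy_general n m v c A hv hc0 hcmono α hα π hπ0 hπ1 hsupp hroi

end
end SponsoredShopping
end

section
/- Fix uniform bids b_{ij} = α_i v_{ij} with multipliers α_i ≥ 1 and an allocation a valid under b, and let a^opt be the optimal allocation obtained by ranking all items in descending order of true value v_{ij}, breaking ties in favor of the item appearing earlier in a. Then for every k ∈ [K], for any item (i,j) ∈ M_k := S_k(a) \ S_k(a^opt) and any item (i',j') ∈ O_k := S_k(a^opt) \ S_k(a), the owners are distinct: i ≠ i'. -/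
/-!
Uniform bids rank each bidder's items by value, and `aopt` ranks all items by value with ties
broken as in `a`; hence `a` and `aopt` order the items of any one bidder identically. An item of
bidder `i` that leaves the top `k` is ranked above, in `a`, any item that enters it, so the two
cannot belong to the same bidder.
-/

open Finset MeasureTheory

namespace SponsoredShopping

noncomputable section

variable {n m : ℕ}

theorem mem_topk {a : Alloc n m} {k : ℕ} {x : Item n m} :
    x ∈ topk a k ↔ (a.symm x : ℕ) < k := by
  simp only [topk, mem_image, mem_filter, mem_univ, true_and]
  constructor
  · rintro ⟨r, hr, rfl⟩
    simpa using hr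
  · exact fun h => ⟨a.symm x, h, a.apply_symm_apply x⟩

theorem fst_ne_of_mem_topk_sdiff {a b : Alloc n m}
    (hab : ∀ x y : Item n m, x.1 = y.1 → a.symm x ≤ a.symm y → b.symm x ≤ b.symm y)
    {k : ℕ} {x y : Item n m} (hx : x ∈ topk a k \ topk b k) (hy : y ∈ topk b k \ topk a k) :
    x.1 ≠ y.1 := by
  simp only [mem_sdiff, mem_topk, not_lt] at hx hy
  intro hxy
  have hbxy : b.symm x ≤ b.symm y := hab x y hxy (Fin.le_iff_val_le_val.2 (by omega))
  rw [Fin.le_iff_val_le_val] at hbxy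
  omega

theorem ValidUnder.le_of_symm_le {α : Fin n → ℝ} {v : Item n m → ℝ} {a : Alloc n m}
    (ha : ValidUnder (fun x => α x.1 * v x) a) {x y : Item n m} (hxy : x.1 = y.1)
    (hα : 0 < α x.1) (h : a.symm x ≤ a.symm y) : v y ≤ v x := by
  have hbid := ha _ _ h
  simp only [Equiv.apply_symm_apply, ← hxy] at hbid
  exact le_of_mul_le_mul_left hbid hα

theorem symm_le_symm_of_sorted {v : Item n m → ℝ} {a aopt : Alloc n m}
    (hsort : ∀ r r' : Fin (n * m), r ≤ r' → v (aopt r') ≤ v (aopt r))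
    (htie : ∀ x y : Item n m, v x = v y → (aopt.symm x ≤ aopt.symm y ↔ a.symm x ≤ a.symm y))
    {x y : Item n m} (hvxy : v y ≤ v x) (h : a.symm x ≤ a.symm y) :
    aopt.symm x ≤ aopt.symm y := by
  rcases hvxy.lt_or_eq with hlt | heq
  · by_contra! hyx
    have := hsort _ _ hyx.le
    simp only [Equiv.apply_symm_apply] at this
    linarith
  · exact (htie x y heq.symm).2 h

theorem disjoint_ownership_general
    (n m K : ℕ) (v : Item n m → ℝ)
    (α : Fin n → ℝ) (hα : ∀ i, 1 ≤ α i)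
    (a : Alloc n m) (ha : ValidUnder (fun x => α x.1 * v x) a)
    (aopt : Alloc n m)
    (hsort : ∀ r r' : Fin (n * m), r ≤ r' → v (aopt r') ≤ v (aopt r))
    (htie : ∀ x y : Item n m, v x = v y →
      (aopt.symm x ≤ aopt.symm y ↔ a.symm x ≤ a.symm y)) :
    ∀ k : ℕ, k ≤ K →
      ∀ x ∈ topk a k \ topk aopt k, ∀ y ∈ topk aopt k \ topk a k,
        x.1 ≠ y.1 := by
  intro k _ x hx y hy
  refine fst_ne_of_mem_topk_sdiff (fun x y hxy h => ?_) hx hy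
  have hvyx : v y ≤ v x := ha.le_of_symm_le hxy (one_pos.trans_le (hα x.1)) h
  exact symm_le_symm_of_sorted hsort htie hvyx h

/-- Disjoint ownership: for every prefix `k ≤ K`, the items winning in the
mechanism but not in the optimum, and vice versa, belong to distinct bidders. -/
theorem disjoint_ownership
    (n m K : ℕ) (v : Item n m → ℝ)
    (hv : ∀ x : Item n m, 0 ≤ v x)
    (hvmono : ∀ (i : Fin n) (j j' : Fin m), j ≤ j' → v (i, j') ≤ v (i, j))
    (α : Fin n → ℝ) (hα : ∀ i, 1 ≤ α i)
    (a : Alloc n m) (ha : ValidUnder (fun x => α x.1 * v x) a)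
    (aopt : Alloc n m)
    (hsort : ∀ r r' : Fin (n * m), r ≤ r' → v (aopt r') ≤ v (aopt r))
    (htie : ∀ x y : Item n m, v x = v y →
      (aopt.symm x ≤ aopt.symm y ↔ a.symm x ≤ a.symm y)) :
    ∀ k : ℕ, k ≤ K →
      ∀ x ∈ topk a k \ topk aopt k, ∀ y ∈ topk aopt k \ topk a k,
        x.1 ≠ y.1 :=
  disjoint_ownership_general n m K v α hα a ha aopt hsort htie

end
end SponsoredShopping
end
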